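/- arXiv:math/0610153 — 6 statements merged into one kernel-verified Lean document; each statement's English description precedes it below -/
import Mathlib

section
/- Let u be a semiclassical moment functional on real polynomials in d variables, with data Φ symmetric d×d of degree p, Ψ of size d×1 with degree q ≥ 1, s = max{p−2, q−1}, and let {ℙ_n}_{n≥0} be a WOPS with respect to u. Then for every n ≥ s+1 there exist polynomial matrices M_1^n of size (d·r_{n+1})×r_n with deg M_1^n ≤ s and M_2^n of size (d·r_n)×r_n with deg M_2^n ≤ s+1 such that Φ ∇ℙ_n^t = (I_d ⊗ ℙ_{n+1}^t) M_1^n + (I_d ⊗ ℙ_n^t) M_2^n. -/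
open MvPolynomial Matrix Finset MeasureTheory

noncomputable section

/-- Real polynomials in `d` variables. -/
abbrev MPoly (d : ℕ) := MvPolynomial (Fin d) ℝ

/-- A moment functional: a linear functional on `MPoly d`. -/
abbrev MomF (d : ℕ) := MPoly d →ₗ[ℝ] ℝ

/-- `r_n = binom(n + d - 1, n)`, the dimension of the space of homogeneous
polynomials of degree `n` in `d` variables. -/
def rdim (d n : ℕ) : ℕ := (n + d - 1).choose n

/-- Entrywise application of a moment functional to a polynomial matrix. -/
def mApply {d : ℕ} (u : MomF d) {m n : Type*} (M : Matrix m n (MPoly d)) : Matrix m n ℝ :=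
  Matrix.of fun i j => u (M i j)

/-- The matrix Pearson equation `div(Φ u) = Ψᵗ u`, i.e. `⟨u, Φ ∇f + Ψ f⟩ = 0`
for every polynomial `f` (a system of `d` scalar equations). -/
def Pearson {d : ℕ} (u : MomF d) (Φ : Matrix (Fin d) (Fin d) (MPoly d))
    (Ψ : Fin d → MPoly d) : Prop :=
  ∀ f : MPoly d, ∀ i : Fin d, u (∑ j, Φ i j * pderiv j f + Ψ i * f) = 0

/-- Degree of a polynomial matrix: max of total degrees of the entries. -/
def matDeg {d : ℕ} {m n : Type*} [Fintype m] [Fintype n]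
    (M : Matrix m n (MPoly d)) : ℕ :=
  Finset.univ.sup fun p : m × n => (M p.1 p.2).totalDegree

/-- Degree of a polynomial (column) vector. -/
def vecDeg {d : ℕ} {m : Type*} [Fintype m] (v : m → MPoly d) : ℕ :=
  Finset.univ.sup fun i => (v i).totalDegree

/-- The Jacobian `∇ℙᵗ`: the `d × m` matrix with `(i,k)` entry `∂ᵢ P k`. -/
def gradT {d m : ℕ} (P : Fin m → MPoly d) : Matrix (Fin d) (Fin m) (MPoly d) :=
  Matrix.of fun i k => pderiv i (P k)

/-- The Kronecker product `I_d ⊗ ℙᵗ`: the block-diagonal `d × (d·m)` matrix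
whose `d` diagonal blocks equal the row vector `ℙᵗ`. -/
def kronIdRow {d m : ℕ} (P : Fin m → MPoly d) :
    Matrix (Fin d) (Fin d × Fin m) (MPoly d) :=
  Matrix.of fun i jk => if i = jk.1 then P jk.2 else 0

/-- A constant real matrix viewed as a polynomial matrix. -/
def cmap {d : ℕ} {m n : Type*} (F : Matrix m n ℝ) : Matrix m n (MPoly d) :=
  F.map MvPolynomial.C

/-- `{ℙ_n}` is a weak orthogonal polynomial system with respect to `u`:
each entry of `ℙ_n` has total degree `n`, the entries of `ℙ_0, …, ℙ_n` form a
basis of the polynomials of total degree at most `n` (spanning + linear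
independence), `⟨u, ℙ_n ℙ_mᵗ⟩ = 0` for `n ≠ m`, and `H_n = ⟨u, ℙ_n ℙ_nᵗ⟩` is
nonsingular. -/
structure IsWOPS {d : ℕ} (u : MomF d) (P : (n : ℕ) → Fin (rdim d n) → MPoly d) : Prop where
  deg : ∀ n k, (P n k).totalDegree = n
  span : ∀ n : ℕ, MvPolynomial.restrictTotalDegree (Fin d) ℝ n ≤
    Submodule.span ℝ {g | ∃ m ≤ n, ∃ k, P m k = g}
  indep : LinearIndependent ℝ (fun p : (n : ℕ) × Fin (rdim d n) => P p.1 p.2)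
  orth : ∀ m n, m ≠ n → ∀ j k, u (P m j * P n k) = 0
  Hdet : ∀ n, (Matrix.of fun j k : Fin (rdim d n) => u (P n j * P n k)).det ≠ 0

/-- The matrix `H_n = ⟨u, ℙ_n ℙ_nᵗ⟩`. -/
def Hmat {d : ℕ} (u : MomF d) (P : (n : ℕ) → Fin (rdim d n) → MPoly d) (n : ℕ) :
    Matrix (Fin (rdim d n)) (Fin (rdim d n)) ℝ :=
  Matrix.of fun j k => u (P n j * P n k)

/-- The second-order differential operator
`L[f] = Σ_{i,j} φ_ij ∂²f/∂xᵢ∂xⱼ + Σ_i ψ_i ∂f/∂xᵢ` associated with `Φ`, `Ψ`. -/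
def Lop {d : ℕ} (Φ : Matrix (Fin d) (Fin d) (MPoly d)) (Ψ : Fin d → MPoly d)
    (f : MPoly d) : MPoly d :=
  (∑ i, ∑ j, Φ i j * pderiv i (pderiv j f)) + ∑ i, Ψ i * pderiv i f

/-!
Each entry `f` of `Φ ∇ℙₙᵗ` has degree `≤ n + s + 1`, and the Pearson equation tested on
`ℙₙ,ₖ ℙₘ,ₗ` shows that `f` is `u`-orthogonal to `ℙₘ` for `m ≤ n - s - 2`. As every `Hₘ` is
nonsingular, `f` therefore lies in the span of the levels `ℙₑ` with `n - s - 1 ≤ e ≤ n + s + 1`.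
The three-term relation, read upwards (`ℙₘ₊₁` through `xᵢ ℙₘ`, `ℙₘ`, `ℙₘ₋₁`) and downwards
(`ℙₘ` through `xᵢ ℙₘ₊₁`, `ℙₘ₊₁`, `ℙₘ₊₂`), then writes each of these levels, by induction on
`|e - n|`, as `ℙₙ₊₁ᵗ a + ℙₙᵗ b` with `deg a ≤ s` and `deg b ≤ s + 1`.
-/

namespace MvPolynomial

variable {σ R : Type*} [CommSemiring R]

theorem totalDegree_pderiv_lt {i : σ} {f : MvPolynomial σ R} (h : pderiv i f ≠ 0) :
    (pderiv i f).totalDegree < f.totalDegree := by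
  obtain ⟨m, hm, hdeg⟩ := Finset.exists_mem_eq_sup _ (support_nonempty.mpr h)
    fun m : σ →₀ ℕ => m.degree
  have hm' : m + Finsupp.single i 1 ∈ f.support := by
    rw [mem_support_iff, coeff_pderiv] at hm
    exact mem_support_iff.mpr (left_ne_zero_of_mul hm)
  calc (pderiv i f).totalDegree = m.degree := hdeg
    _ < (m + Finsupp.single i 1).degree := by simp
    _ ≤ f.totalDegree := le_totalDegree hm'

theorem totalDegree_pderiv_le (i : σ) (f : MvPolynomial σ R) :
    (pderiv i f).totalDegree ≤ f.totalDegree - 1 := by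
  by_cases h : pderiv i f = 0
  · simp [h]
  · have := totalDegree_pderiv_lt h
    omega

theorem monomial_eq_X_mul {α : σ →₀ ℕ} {i : σ} (h : α i ≠ 0) (c : R) :
    monomial α c = X i * monomial (α - Finsupp.single i 1) c := by
  have hle : Finsupp.single i 1 ≤ α := Finsupp.single_le_iff.mpr (Nat.one_le_iff_ne_zero.mpr h)
  rw [X, monomial_mul, one_mul, add_tsub_cancel_of_le hle]

theorem restrictTotalDegree_succ_le {m : ℕ} {M : Submodule R (MvPolynomial σ R)}
    (h₀ : restrictTotalDegree σ R m ≤ M)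
    (hX : ∀ i, ∀ g ∈ restrictTotalDegree σ R m, X i * g ∈ M) :
    restrictTotalDegree σ R (m + 1) ≤ M := by
  intro f hf
  rw [mem_restrictTotalDegree] at hf
  rw [f.as_sum]
  refine Submodule.sum_mem _ fun α hα => ?_
  have hα' : α.degree ≤ m + 1 := (le_totalDegree hα).trans hf
  by_cases hαm : α.degree ≤ m
  · exact h₀ ((mem_restrictTotalDegree _ _ _).mpr ((totalDegree_monomial_le _ _).trans hαm))
  obtain ⟨i, hi⟩ : ∃ i, α i ≠ 0 := by
    by_contra! h0
    exact hαm (by simp [show α = 0 from Finsupp.ext h0])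
  rw [monomial_eq_X_mul hi]
  refine hX i _ ((mem_restrictTotalDegree _ _ _).mpr ((totalDegree_monomial_le _ _).trans ?_))
  have hsplit := congrArg Finsupp.degree (tsub_add_cancel_of_le
    (Finsupp.single_le_iff.mpr (Nat.one_le_iff_ne_zero.mpr hi)))
  rw [map_add, Finsupp.degree_single] at hsplit
  change (α - Finsupp.single i 1).degree ≤ m
  omega

section CombinationsDegLE

variable {ι : Type*} [Fintype ι]

def combinationsDegLE (Q : ι → MvPolynomial σ R) (t : ℕ) : Submodule R (MvPolynomial σ R) :=
  (Submodule.pi Set.univ fun _ => restrictTotalDegree σ R t).map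
    ((Fintype.linearCombination (MvPolynomial σ R) Q).restrictScalars R)

variable {Q : ι → MvPolynomial σ R} {t : ℕ}

theorem mem_combinationsDegLE {f : MvPolynomial σ R} :
    f ∈ combinationsDegLE Q t ↔
      ∃ a : ι → MvPolynomial σ R, (∀ l, (a l).totalDegree ≤ t) ∧ ∑ l, a l * Q l = f := by
  simp [combinationsDegLE, Submodule.mem_pi, mem_restrictTotalDegree,
    Fintype.linearCombination_apply]

theorem combinationsDegLE_mono {t' : ℕ} (h : t ≤ t') :
    combinationsDegLE Q t ≤ combinationsDegLE Q t' := fun _ hf => by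
  obtain ⟨a, ha, rfl⟩ := mem_combinationsDegLE.mp hf
  exact mem_combinationsDegLE.mpr ⟨a, fun l => (ha l).trans h, rfl⟩

theorem mul_mem_combinationsDegLE [DecidableEq ι] {g : MvPolynomial σ R}
    (hg : g.totalDegree ≤ t) (l : ι) : g * Q l ∈ combinationsDegLE Q t := by
  refine mem_combinationsDegLE.mpr ⟨Pi.single l g, fun l' => ?_, by simp [Pi.single_apply]⟩
  rcases eq_or_ne l' l with rfl | h
  · simpa using hg
  · simp [h]

theorem X_mul_mem_combinationsDegLE {f : MvPolynomial σ R} (hf : f ∈ combinationsDegLE Q t)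
    (i : σ) : X i * f ∈ combinationsDegLE Q (t + 1) := by
  obtain ⟨a, ha, rfl⟩ := mem_combinationsDegLE.mp hf
  refine mem_combinationsDegLE.mpr ⟨fun l => X i * a l, fun l => ?_, ?_⟩
  · have hX : (X i : MvPolynomial σ R).totalDegree ≤ 1 :=
      (totalDegree_monomial_le _ _).trans (by simp)
    exact (totalDegree_mul _ _).trans (by grw [hX, ha l, add_comm])
  · simp [Finset.mul_sum, mul_assoc]

end CombinationsDegLE

end MvPolynomial

section PolynomialMatrices

variable {d : ℕ} {m n : Type*}

theorem totalDegree_le_matDeg [Fintype m] [Fintype n] (M : Matrix m n (MPoly d)) (i : m)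
    (j : n) : (M i j).totalDegree ≤ matDeg M :=
  Finset.le_sup (f := fun p : m × n => (M p.1 p.2).totalDegree) (Finset.mem_univ (i, j))

theorem matDeg_le [Fintype m] [Fintype n] {M : Matrix m n (MPoly d)} {t : ℕ}
    (h : ∀ i j, (M i j).totalDegree ≤ t) : matDeg M ≤ t :=
  Finset.sup_le fun p _ => h p.1 p.2

theorem totalDegree_le_vecDeg [Fintype m] (v : m → MPoly d) (i : m) :
    (v i).totalDegree ≤ vecDeg v :=
  Finset.le_sup (f := fun i => (v i).totalDegree) (Finset.mem_univ i)

theorem kronIdRow_mul_apply {r : ℕ} (Q : Fin r → MPoly d)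
    (M : Matrix (Fin d × Fin r) n (MPoly d)) (i : Fin d) (k : n) :
    (kronIdRow Q * M) i k = ∑ l, Q l * M (i, l) k := by
  simp [Matrix.mul_apply, kronIdRow, Fintype.sum_prod_type]

theorem totalDegree_mul_gradT_le {r : ℕ} {Φ : Matrix m (Fin d) (MPoly d)} {a : ℕ}
    (hΦ : ∀ i j, (Φ i j).totalDegree ≤ a) (Q : Fin r → MPoly d) (i : m) (k : Fin r) :
    ((Φ * gradT Q) i k).totalDegree ≤ a + ((Q k).totalDegree - 1) := by
  refine totalDegree_finsetSum_le fun j _ => (totalDegree_mul _ _).trans ?_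
  grw [hΦ i j]
  exact Nat.add_le_add_left (totalDegree_pderiv_le j (Q k)) a

end PolynomialMatrices

section Levels

variable {d : ℕ} {u : MomF d} {P : (n : ℕ) → Fin (rdim d n) → MPoly d}

def levelSpan (P : (n : ℕ) → Fin (rdim d n) → MPoly d) (S : Set ℕ) : Submodule ℝ (MPoly d) :=
  Submodule.span ℝ {f | ∃ m ∈ S, ∃ k, P m k = f}

def xMulSpan (P : (n : ℕ) → Fin (rdim d n) → MPoly d) (m : ℕ) : Submodule ℝ (MPoly d) :=
  Submodule.span ℝ (Set.range fun il : Fin d × Fin (rdim d m) => X il.1 * P m il.2)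

theorem levelSpan_le_iff {S : Set ℕ} {M : Submodule ℝ (MPoly d)} :
    levelSpan P S ≤ M ↔ ∀ m ∈ S, ∀ k, P m k ∈ M := by
  rw [levelSpan, Submodule.span_le]
  exact ⟨fun h m hm k => h ⟨m, hm, k, rfl⟩, fun h _ ⟨m, hm, k, hf⟩ => hf ▸ h m hm k⟩

theorem mem_levelSpan {S : Set ℕ} {m : ℕ} (hm : m ∈ S) (k : Fin (rdim d m)) :
    P m k ∈ levelSpan P S :=
  Submodule.subset_span ⟨m, hm, k, rfl⟩

theorem levelSpan_mono {S T : Set ℕ} (h : S ⊆ T) : levelSpan P S ≤ levelSpan P T :=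
  levelSpan_le_iff.mpr fun _ hm k => mem_levelSpan (h hm) k

theorem mem_levelSpan_singleton {m : ℕ} {f : MPoly d} :
    f ∈ levelSpan P {m} ↔ ∃ c : Fin (rdim d m) → ℝ, ∑ k, c k • P m k = f := by
  have : {f | ∃ m' ∈ ({m} : Set ℕ), ∃ k, P m' k = f} = Set.range (P m) := by
    ext f
    simp
  rw [levelSpan, this, Submodule.mem_span_range_iff_exists_fun]

theorem xMulSpan_le_iff {m : ℕ} {M : Submodule ℝ (MPoly d)} :
    xMulSpan P m ≤ M ↔ ∀ i l, X i * P m l ∈ M := by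
  simp [xMulSpan, Submodule.span_le, Set.range_subset_iff]

namespace IsWOPS

variable (hW : IsWOPS u P)
include hW

theorem mem_levelSpan_Iic {f : MPoly d} {N : ℕ} (hf : f.totalDegree ≤ N) :
    f ∈ levelSpan P (Set.Iic N) :=
  hW.span N ((mem_restrictTotalDegree _ _ _).mpr hf)

theorem totalDegree_le_of_mem_levelSpan {S : Set ℕ} {N : ℕ} (hS : S ⊆ Set.Iic N)
    {f : MPoly d} (hf : f ∈ levelSpan P S) : f.totalDegree ≤ N := by
  rw [← mem_restrictTotalDegree]
  refine levelSpan_le_iff.mpr (fun m hm k => ?_) hf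
  rw [mem_restrictTotalDegree, hW.deg]
  exact hS hm

theorem totalDegree_le_of_mem_xMulSpan {m : ℕ} {w : MPoly d} (hw : w ∈ xMulSpan P m) :
    w.totalDegree ≤ m + 1 := by
  rw [← mem_restrictTotalDegree]
  refine xMulSpan_le_iff.mpr (fun i l => ?_) hw
  rw [mem_restrictTotalDegree]
  grw [totalDegree_mul, totalDegree_X, hW.deg, add_comm]

theorem apply_mul_eq_zero_of_mem_levelSpan {S : Set ℕ} {m : ℕ} (hm : m ∉ S) {f : MPoly d}
    (hf : f ∈ levelSpan P S) (k : Fin (rdim d m)) : u (f * P m k) = 0 := by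
  have : levelSpan P S ≤ LinearMap.ker (u ∘ₗ LinearMap.mulRight ℝ (P m k)) :=
    levelSpan_le_iff.mpr fun e he j => hW.orth e m (ne_of_mem_of_not_mem he hm) j k
  exact this hf

theorem apply_mul_eq_zero_of_totalDegree_lt {f : MPoly d} {m : ℕ} (hf : f.totalDegree < m)
    (k : Fin (rdim d m)) : u (f * P m k) = 0 :=
  hW.apply_mul_eq_zero_of_mem_levelSpan (by simpa using hf) (hW.mem_levelSpan_Iic le_rfl) k

theorem apply_mul_eq_zero_of_mem_xMulSpan {m e : ℕ} (he : e + 1 < m) {w : MPoly d}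
    (hw : w ∈ xMulSpan P m) (k : Fin (rdim d e)) : u (w * P e k) = 0 := by
  have : xMulSpan P m ≤ LinearMap.ker (u ∘ₗ LinearMap.mulRight ℝ (P e k)) :=
    xMulSpan_le_iff.mpr fun i l => by
      have hdeg : (X i * P e k).totalDegree < m := by
        grw [totalDegree_mul, totalDegree_X, hW.deg]
        omega
      simpa [mul_right_comm] using hW.apply_mul_eq_zero_of_totalDegree_lt hdeg l
  exact this hw

theorem eq_zero_of_orthogonal_level {m : ℕ} {c : Fin (rdim d m) → ℝ}
    (h : ∀ j, u ((∑ k, c k • P m k) * P m j) = 0) : c = 0 := by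
  refine Matrix.eq_zero_of_vecMul_eq_zero (M := Hmat u P m) (hW.Hdet m) (funext fun j => ?_)
  rw [Pi.zero_apply, ← h j, Finset.sum_mul, map_sum]
  simp [Matrix.vecMul, dotProduct, Hmat]

theorem mem_levelSpan_diff_of_orthogonal {S : Set ℕ} {m : ℕ} {f : MPoly d}
    (hf : f ∈ levelSpan P S) (h : ∀ k, u (f * P m k) = 0) : f ∈ levelSpan P (S \ {m}) := by
  have hsplit : levelSpan P S ≤ levelSpan P (S \ {m}) ⊔ levelSpan P {m} :=
    levelSpan_le_iff.mpr fun e he k => by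
      by_cases hem : e = m
      · exact Submodule.mem_sup_right (mem_levelSpan (S := {m}) hem k)
      · exact Submodule.mem_sup_left (mem_levelSpan (S := S \ {m}) ⟨he, hem⟩ k)
  obtain ⟨g, hg, h', hh', rfl⟩ := Submodule.mem_sup.mp (hsplit hf)
  obtain ⟨c, rfl⟩ := mem_levelSpan_singleton.mp hh'
  have hc : c = 0 := hW.eq_zero_of_orthogonal_level fun j => by
    rw [← h j, add_mul, map_add,
      hW.apply_mul_eq_zero_of_mem_levelSpan (fun hm => hm.2 rfl) hg, zero_add]
  simpa [hc] using hg

theorem mem_levelSpan_Icc_of_orthogonal {f : MPoly d} {M N : ℕ} (hf : f.totalDegree ≤ N)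
    (h : ∀ m < M, ∀ k, u (f * P m k) = 0) : f ∈ levelSpan P (Set.Icc M N) := by
  induction M with
  | zero =>
    exact levelSpan_mono (S := Set.Iic N) (T := Set.Icc 0 N) (fun e he => ⟨Nat.zero_le e, he⟩)
      (hW.mem_levelSpan_Iic hf)
  | succ M ih =>
    have := hW.mem_levelSpan_diff_of_orthogonal (ih fun m hm => h m (by omega)) (h M (by omega))
    refine levelSpan_mono (fun e he => ?_) this
    simp only [Set.mem_sdiff, Set.mem_Icc, Set.mem_singleton_iff] at he
    exact ⟨by omega, he.1.2⟩

theorem level_succ_mem (m : ℕ) (j : Fin (rdim d (m + 1))) :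
    P (m + 1) j ∈ xMulSpan P m ⊔ levelSpan P (Set.Icc (m - 1) m) := by
  set V := xMulSpan P m ⊔ levelSpan P (Set.Iic m)
  have hlow : restrictTotalDegree (Fin d) ℝ m ≤ V := fun g hg =>
    Submodule.mem_sup_right (hW.mem_levelSpan_Iic ((mem_restrictTotalDegree _ _ _).mp hg))
  have hX : ∀ i, ∀ g ∈ restrictTotalDegree (Fin d) ℝ m, X i * g ∈ V := fun i g hg => by
    refine (levelSpan_le_iff (M := V.comap (LinearMap.mulLeft ℝ (X i)))).mpr
      (fun e (he : e ≤ m) k => ?_) (hW.mem_levelSpan_Iic ((mem_restrictTotalDegree _ _ _).mp hg))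
    rcases he.lt_or_eq with he | rfl
    · refine Submodule.mem_sup_right (hW.mem_levelSpan_Iic ?_)
      change (X i * P e k).totalDegree ≤ m
      grw [totalDegree_mul, totalDegree_X, hW.deg]
      omega
    · exact Submodule.mem_sup_left (Submodule.subset_span ⟨(i, k), rfl⟩)
  have hP : P (m + 1) j ∈ restrictTotalDegree (Fin d) ℝ (m + 1) :=
    (mem_restrictTotalDegree _ _ _).mpr (hW.deg _ _).le
  obtain ⟨w, hw, r, hr, hwr⟩ := Submodule.mem_sup.mp (restrictTotalDegree_succ_le hlow hX hP)
  have hr' : r ∈ levelSpan P (Set.Icc (m - 1) m) := by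
    refine hW.mem_levelSpan_Icc_of_orthogonal (hW.totalDegree_le_of_mem_levelSpan le_rfl hr)
      fun e he k => ?_
    rw [← add_sub_cancel_left w r, hwr, sub_mul, map_sub, hW.orth _ _ (by omega),
      hW.apply_mul_eq_zero_of_mem_xMulSpan (by omega) hw, sub_zero]
  rw [← hwr]
  exact Submodule.add_mem_sup hw hr'

theorem apply_mul_eq_zero_of_X_mul_orthogonal {m : ℕ} {g : MPoly d} (hg : g.totalDegree ≤ m)
    (i : Fin d) (hxg : ∀ l, u (X i * g * P (m + 1) l) = 0) (j : Fin (rdim d m)) :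
    u (g * P m j) = 0 := by
  by_cases hg0 : g = 0
  · simp [hg0]
  refine hW.apply_mul_eq_zero_of_totalDegree_lt ?_ j
  have hxgdeg : (X i * g).totalDegree ≤ m := by
    refine hW.totalDegree_le_of_mem_levelSpan (S := Set.Iic (m + 1) \ {m + 1})
      (fun e ⟨he, hne⟩ => ?_)
      (hW.mem_levelSpan_diff_of_orthogonal (hW.mem_levelSpan_Iic ?_) hxg)
    · exact Nat.le_of_lt_succ (lt_of_le_of_ne he hne)
    · grw [totalDegree_mul, totalDegree_X, hg, add_comm]
  rw [totalDegree_mul_of_isDomain (X_ne_zero i) hg0, totalDegree_X] at hxgdeg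
  omega

/-- A functional on `ℝ^{rₘ}` vanishing on these moments is `v ↦ Σₖ vₖ μₖ`, and then
`g = Σₖ μₖ ℙₘ,ₖ` has every `xᵢ g` orthogonal to `ℙₘ₊₁`, which forces `g = 0`. -/
theorem exists_mem_xMulSpan_moments_eq [Nonempty (Fin d)] (m : ℕ) (c : Fin (rdim d m) → ℝ) :
    ∃ w ∈ xMulSpan P (m + 1), ∀ k, u (w * P m k) = c k := by
  let L : MPoly d →ₗ[ℝ] Fin (rdim d m) → ℝ :=
    LinearMap.pi fun k => u ∘ₗ LinearMap.mulRight ℝ (P m k)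
  suffices (xMulSpan P (m + 1)).map L = ⊤ by
    obtain ⟨w, hw, hwc⟩ := Submodule.mem_map.mp (this ▸ Submodule.mem_top : c ∈ _)
    exact ⟨w, hw, fun k => congrFun hwc k⟩
  by_contra hne
  obtain ⟨φ, hφ, hφL⟩ :=
    Submodule.exists_dual_map_eq_bot_of_lt_top (lt_top_iff_ne_top.mpr hne) inferInstance
  let μ : Fin (rdim d m) → ℝ := fun k => φ fun j => if k = j then 1 else 0
  let g : MPoly d := ∑ k, μ k • P m k
  have hφ_apply : ∀ w, φ (L w) = u (w * g) := fun w => by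
    rw [LinearMap.pi_apply_eq_sum_univ φ]
    simp only [g, Finset.mul_sum, mul_smul_comm, map_sum, map_smul, smul_eq_mul, L,
      LinearMap.pi_apply, LinearMap.comp_apply, LinearMap.mulRight_apply, mul_comm]
    rfl
  have hg : ∀ j, u (g * P m j) = 0 := by
    refine hW.apply_mul_eq_zero_of_X_mul_orthogonal ?_ (Classical.arbitrary _) fun l => ?_
    · exact hW.totalDegree_le_of_mem_levelSpan (S := {m}) (by simp)
        (mem_levelSpan_singleton.mpr ⟨μ, rfl⟩)
    · rw [mul_right_comm, ← hφ_apply]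
      exact (Submodule.mem_bot ℝ).mp (hφL ▸ Submodule.mem_map_of_mem
        (Submodule.mem_map_of_mem (Submodule.subset_span ⟨(_, l), rfl⟩)))
  have hμ : μ = 0 := hW.eq_zero_of_orthogonal_level hg
  refine hφ (LinearMap.ext fun x => ?_)
  rw [LinearMap.pi_apply_eq_sum_univ φ]
  simp [show ∀ k, φ (fun j => if k = j then 1 else 0) = 0 from congrFun hμ]

theorem level_mem [Nonempty (Fin d)] (m : ℕ) (j : Fin (rdim d m)) :
    P m j ∈ xMulSpan P (m + 1) ⊔ levelSpan P (Set.Icc (m + 1) (m + 2)) := by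
  obtain ⟨w, hw, hwj⟩ := hW.exists_mem_xMulSpan_moments_eq m fun k => u (P m j * P m k)
  have hδ : P m j - w ∈ levelSpan P (Set.Icc (m + 1) (m + 2)) := by
    refine hW.mem_levelSpan_Icc_of_orthogonal ?_ fun e he k => ?_
    · grw [totalDegree_sub, hW.deg, hW.totalDegree_le_of_mem_xMulSpan hw]
      omega
    rw [sub_mul, map_sub]
    rcases (Nat.lt_succ_iff.mp he).lt_or_eq with he | rfl
    · rw [hW.orth _ _ (by omega), hW.apply_mul_eq_zero_of_mem_xMulSpan (by omega) hw, sub_zero]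
    · rw [hwj, sub_self]
  simpa using Submodule.add_mem_sup hw hδ

end IsWOPS

def structureSpan (P : (n : ℕ) → Fin (rdim d n) → MPoly d) (n t : ℕ) : Submodule ℝ (MPoly d) :=
  combinationsDegLE (P (n + 1)) t ⊔ combinationsDegLE (P n) (t + 1)

theorem mem_structureSpan {n t : ℕ} {f : MPoly d} :
    f ∈ structureSpan P n t ↔
      ∃ a : Fin (rdim d (n + 1)) → MPoly d, ∃ b : Fin (rdim d n) → MPoly d,
        (∀ l, (a l).totalDegree ≤ t) ∧ (∀ l, (b l).totalDegree ≤ t + 1) ∧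
          f = ∑ l, P (n + 1) l * a l + ∑ l, P n l * b l := by
  simp only [structureSpan, Submodule.mem_sup, mem_combinationsDegLE]
  constructor
  · rintro ⟨_, ⟨a, ha, rfl⟩, _, ⟨b, hb, rfl⟩, rfl⟩
    exact ⟨a, b, ha, hb, by simp only [mul_comm]⟩
  · rintro ⟨a, b, ha, hb, rfl⟩
    exact ⟨_, ⟨a, ha, rfl⟩, _, ⟨b, hb, rfl⟩, by simp only [mul_comm]⟩

theorem structureSpan_mono {n t t' : ℕ} (h : t ≤ t') :
    structureSpan P n t ≤ structureSpan P n t' :=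
  sup_le_sup (combinationsDegLE_mono h) (combinationsDegLE_mono (by omega))

theorem mul_level_mem_structureSpan {n t : ℕ} {g : MPoly d} (hg : g.totalDegree ≤ t + 1)
    (l : Fin (rdim d n)) : g * P n l ∈ structureSpan P n t :=
  Submodule.mem_sup_right (mul_mem_combinationsDegLE hg l)

theorem mul_level_succ_mem_structureSpan {n t : ℕ} {g : MPoly d} (hg : g.totalDegree ≤ t)
    (l : Fin (rdim d (n + 1))) : g * P (n + 1) l ∈ structureSpan P n t :=
  Submodule.mem_sup_left (mul_mem_combinationsDegLE hg l)

theorem xMulSpan_le_structureSpan {m n t : ℕ} (h : ∀ l, P m l ∈ structureSpan P n t) :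
    xMulSpan P m ≤ structureSpan P n (t + 1) :=
  xMulSpan_le_iff.mpr fun i l => by
    obtain ⟨a, ha, b, hb, hab⟩ := Submodule.mem_sup.mp (h l)
    rw [← hab, mul_add]
    exact Submodule.add_mem_sup (X_mul_mem_combinationsDegLE ha i)
      (X_mul_mem_combinationsDegLE hb i)

theorem levelSpan_Icc_self_le_structureSpan (n t : ℕ) :
    levelSpan P (Set.Icc n (n + 1)) ≤ structureSpan P n t := by
  refine levelSpan_le_iff.mpr fun e he k => ?_
  obtain rfl | rfl : n = e ∨ n + 1 = e := by
    simp only [Set.mem_Icc] at he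
    omega
  · simpa using mul_level_mem_structureSpan (P := P) (t := t) (g := 1) (by simp) k
  · simpa using mul_level_succ_mem_structureSpan (P := P) (t := t) (g := 1) (by simp) k

theorem IsWOPS.levelSpan_Icc_le_structureSpan [Nonempty (Fin d)] (hW : IsWOPS u P) (n t : ℕ) :
    levelSpan P (Set.Icc (n - (t + 1)) (n + t + 1)) ≤ structureSpan P n t := by
  induction t with
  | zero =>
    refine levelSpan_le_iff.mpr fun e he k => ?_
    simp only [Set.mem_Icc] at he
    rcases (show e + 1 = n ∨ n ≤ e by omega) with rfl | hne
    · refine sup_le ?_ (levelSpan_Icc_self_le_structureSpan _ _) (hW.level_mem e k)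
      exact xMulSpan_le_iff.mpr fun i l => mul_level_mem_structureSpan (totalDegree_X i).le l
    · exact levelSpan_Icc_self_le_structureSpan n 0
        (mem_levelSpan (Set.mem_Icc.mpr ⟨hne, he.2⟩) k)
  | succ t ih =>
    have ih' : ∀ e, n ≤ e + t + 1 → e ≤ n + t + 1 → ∀ k, P e k ∈ structureSpan P n t :=
      fun e he₁ he₂ k => ih (mem_levelSpan (Set.mem_Icc.mpr ⟨by omega, he₂⟩) k)
    have hold : ∀ a b, n ≤ a + t + 1 → b ≤ n + t + 1 →
        levelSpan P (Set.Icc a b) ≤ structureSpan P n (t + 1) := fun a b ha hb =>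
      levelSpan_le_iff.mpr fun e ⟨hae, heb⟩ k =>
        structureSpan_mono (Nat.le_succ t) (ih' e (by omega) (by omega) k)
    refine levelSpan_le_iff.mpr fun e he k => ?_
    simp only [Set.mem_Icc] at he
    rcases (show e + t + 2 = n ∨ e = n + t + 2 ∨ (n ≤ e + t + 1 ∧ e ≤ n + t + 1) by omega)
      with rfl | rfl | hin
    · exact sup_le (xMulSpan_le_structureSpan (ih' _ (by omega) (by omega)))
        (hold _ _ (by omega) (by omega)) (hW.level_mem e k)
    · exact sup_le (xMulSpan_le_structureSpan (ih' _ (by omega) (by omega)))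
        (hold _ _ (by omega) (by omega)) (hW.level_succ_mem (n + t + 1) k)
    · exact hold e e hin.1 hin.2 (mem_levelSpan (Set.mem_Icc.mpr ⟨le_rfl, le_rfl⟩) k)

/-- Testing the Pearson equation on `ℙₙ,ₖ ℙₘ,ₗ` leaves, besides this moment, only
`⟨u, g ℙₙ,ₖ⟩` with `deg g ≤ m + s + 1 < n`. -/
theorem IsWOPS.apply_mul_eq_zero_of_pearson (hW : IsWOPS u P)
    {Φ : Matrix (Fin d) (Fin d) (MPoly d)} {Ψ : Fin d → MPoly d} (hPearson : Pearson u Φ Ψ)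
    {s : ℕ} (hΦ : ∀ i j, (Φ i j).totalDegree ≤ s + 2) (hΨ : ∀ i, (Ψ i).totalDegree ≤ s + 1)
    {m n : ℕ} (hmn : m + s + 2 ≤ n) (i : Fin d) (k : Fin (rdim d n)) (l : Fin (rdim d m)) :
    u ((Φ * gradT (P n)) i k * P m l) = 0 := by
  set g := ∑ j, Φ i j * pderiv j (P m l) + Ψ i * P m l
  have hsplit : ∑ j, Φ i j * pderiv j (P n k * P m l) + Ψ i * (P n k * P m l) =
      (Φ * gradT (P n)) i k * P m l + g * P n k := by
    simp only [g, Matrix.mul_apply, gradT, Matrix.of_apply, pderiv_mul, mul_add,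
      Finset.sum_add_distrib, add_mul, Finset.sum_mul]
    simp only [mul_comm, mul_left_comm]
    ring
  have hg : g.totalDegree < n := by
    refine lt_of_le_of_lt (totalDegree_add _ _) (max_lt ?_ ?_)
    · refine lt_of_le_of_lt (totalDegree_finsetSum_le fun j _ => ?_) (show n - 1 < n by omega)
      by_cases h0 : pderiv j (P m l) = 0
      · simp [h0]
      have := totalDegree_pderiv_lt h0
      grw [totalDegree_mul, hΦ i j]
      rw [hW.deg] at this
      omega
    · grw [totalDegree_mul, hΨ i, hW.deg]
      omega
  have := hPearson (P n k * P m l) i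
  rwa [hsplit, map_add, hW.apply_mul_eq_zero_of_totalDegree_lt hg, add_zero] at this

end Levels

theorem short_structure_relation_general
    {d : ℕ} (u : MomF d) (P : (n : ℕ) → Fin (rdim d n) → MPoly d)
    (hW : IsWOPS u P)
    (Φ : Matrix (Fin d) (Fin d) (MPoly d))
    (Ψ : Fin d → MPoly d)
    (p q : ℕ) (hp : matDeg Φ = p) (hq : vecDeg Ψ = q)
    (hPearson : Pearson u Φ Ψ)
    (s : ℕ) (hs : s = max (p - 2) (q - 1)) :
    ∀ n : ℕ, s + 1 ≤ n →
      ∃ M₁ : Matrix (Fin d × Fin (rdim d (n + 1))) (Fin (rdim d n)) (MPoly d),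
      ∃ M₂ : Matrix (Fin d × Fin (rdim d n)) (Fin (rdim d n)) (MPoly d),
        matDeg M₁ ≤ s ∧ matDeg M₂ ≤ s + 1 ∧
        Φ * gradT (P n) = kronIdRow (P (n + 1)) * M₁ + kronIdRow (P n) * M₂ := by
  intro n hn
  have hΦ : ∀ i j, (Φ i j).totalDegree ≤ s + 2 := fun i j =>
    (totalDegree_le_matDeg Φ i j).trans (by omega)
  have hΨ : ∀ i, (Ψ i).totalDegree ≤ s + 1 := fun i =>
    (totalDegree_le_vecDeg Ψ i).trans (by omega)
  have hmem : ∀ i k, (Φ * gradT (P n)) i k ∈ structureSpan P n s := fun i k => by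
    have : Nonempty (Fin d) := ⟨i⟩
    refine hW.levelSpan_Icc_le_structureSpan n s (hW.mem_levelSpan_Icc_of_orthogonal ?_
      fun m hm l => hW.apply_mul_eq_zero_of_pearson hPearson hΦ hΨ (by omega) i k l)
    grw [totalDegree_mul_gradT_le hΦ, hW.deg]
    omega
  choose a b ha hb hab using fun i k => mem_structureSpan.mp (hmem i k)
  refine ⟨.of fun il k => a il.1 k il.2, .of fun il k => b il.1 k il.2,
    matDeg_le fun il k => ha il.1 k il.2, matDeg_le fun il k => hb il.1 k il.2, ?_⟩
  ext i k
  simp [kronIdRow_mul_apply, hab]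

/-- **Short structure relation.**
If `u` is semiclassical with data `Φ` (symmetric, degree `p`), `Ψ` (degree
`q ≥ 1`), `s = max{p−2, q−1}`, and `{ℙ_n}` is a WOPS for `u`, then for every
`n ≥ s+1` there are polynomial matrices `M₁ⁿ` (degree ≤ `s`) and `M₂ⁿ`
(degree ≤ `s+1`) with `Φ ∇ℙ_nᵗ = (I_d ⊗ ℙ_{n+1}ᵗ) M₁ⁿ + (I_d ⊗ ℙ_nᵗ) M₂ⁿ`. -/
theorem short_structure_relation
    {d : ℕ} (u : MomF d) (P : (n : ℕ) → Fin (rdim d n) → MPoly d)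
    (hW : IsWOPS u P)
    (Φ : Matrix (Fin d) (Fin d) (MPoly d)) (hΦsym : Φ.IsSymm)
    (Ψ : Fin d → MPoly d)
    (p q : ℕ) (hp : matDeg Φ = p) (hq : vecDeg Ψ = q) (hq1 : 1 ≤ q)
    (hPearson : Pearson u Φ Ψ)
    (hdet : (mApply u Φ).det ≠ 0)
    (s : ℕ) (hs : s = max (p - 2) (q - 1)) :
    ∀ n : ℕ, s + 1 ≤ n →
      ∃ M₁ : Matrix (Fin d × Fin (rdim d (n + 1))) (Fin (rdim d n)) (MPoly d),
      ∃ M₂ : Matrix (Fin d × Fin (rdim d n)) (Fin (rdim d n)) (MPoly d),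
        matDeg M₁ ≤ s ∧ matDeg M₂ ≤ s + 1 ∧
        Φ * gradT (P n) = kronIdRow (P (n + 1)) * M₁ + kronIdRow (P n) * M₂ :=
  short_structure_relation_general u P hW Φ Ψ p q hp hq hPearson s hs
end
end

section
/- Let u be a semiclassical moment functional on real polynomials in d variables, with data Φ symmetric d×d of degree p, Ψ of size d×1 with degree q ≥ 1, s = max{p−2, q−1}, and let {ℙ_n}_{n≥0} be a WOPS with respect to u. Then for every n ≥ s+1 and every m with 0 ≤ m < n−s, the r_m×r_n matrix ⟨u, (∇ℙ_m^t)^t Φ ∇ℙ_n^t⟩ is zero (quasi-orthogonality of the gradients). -/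
/-!
Pairing the Pearson equation `div(Φ u) = Ψᵗ u` with `f = g ∂ᵢh` and summing over `i` is an
integration by parts: `⟨u, (∇h)ᵗ Φ ∇g⟩ = -⟨u, g L[h]⟩`, where `L` is the second-order operator of
`Φ, Ψ`. Since `deg Φ ≤ s + 2` and `deg Ψ ≤ s + 1`, the operator `L` raises degrees by at most `s`.
So each entry of `⟨u, (∇ℙ_mᵗ)ᵗ Φ ∇ℙ_nᵗ⟩` is, up to sign, `u` applied to an entry of `ℙ_n` times a
polynomial of degree at most `m + s < n`, which vanishes by orthogonality.
-/

open MvPolynomial Matrix Finset MeasureTheory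

noncomputable section

section Derivatives

variable {σ R : Type*} [CommSemiring R]

theorem MvPolynomial.pderiv_pderiv_comm (i j : σ) (f : MvPolynomial σ R) :
    pderiv i (pderiv j f) = pderiv j (pderiv i f) := by
  induction f using MvPolynomial.induction_on with
  | C a => simp
  | add p q hp hq => simp only [map_add, hp, hq]
  | mul_X p k ih =>
    have hX (a b : σ) : pderiv a (pderiv b (X k : MvPolynomial σ R)) = 0 := by
      classical
      rw [pderiv_X, Pi.single_apply]
      split_ifs <;> simp
    simp only [Derivation.leibniz, map_add, smul_eq_mul, ih, hX, mul_zero, zero_add]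
    ring

theorem MvPolynomial.totalDegree_pderiv_le_s2 (i : σ) (f : MvPolynomial σ R) :
    (pderiv i f).totalDegree ≤ f.totalDegree - 1 := by
  conv_lhs => rw [f.as_sum, map_sum]
  refine totalDegree_finsetSum_le fun v hv => ?_
  rw [pderiv_monomial]
  by_cases hvi : v i = 0
  · simp [hvi]
  refine (totalDegree_monomial_le _ _).trans ?_
  have hle : Finsupp.single i 1 ≤ v := Finsupp.single_le_iff.mpr (Nat.one_le_iff_ne_zero.mpr hvi)
  have hsum : (v - Finsupp.single i 1).sum (fun _ ↦ id) + 1 = v.sum (fun _ e => e) := by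
    conv_rhs => rw [← tsub_add_cancel_of_le hle]
    rw [Finsupp.sum_add_index' (fun _ => rfl) (fun _ _ _ => rfl), Finsupp.sum_single_index rfl]
    rfl
  have hv : v.sum (fun _ e => e) ≤ f.totalDegree := le_totalDegree hv
  omega

theorem MvPolynomial.totalDegree_mul_pderiv_le (g : MvPolynomial σ R) (i : σ)
    (f : MvPolynomial σ R) :
    (g * pderiv i f).totalDegree ≤ g.totalDegree + f.totalDegree - 1 := by
  by_cases hf : f.totalDegree = 0
  · rw [totalDegree_eq_zero_iff_eq_C.mp hf, pderiv_C, mul_zero, totalDegree_zero]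
    exact Nat.zero_le _
  have := totalDegree_pderiv_le_s2 i f
  have := totalDegree_mul g (pderiv i f)
  omega

theorem MvPolynomial.totalDegree_mul_pderiv_pderiv_le (g : MvPolynomial σ R) (i j : σ)
    (f : MvPolynomial σ R) :
    (g * pderiv i (pderiv j f)).totalDegree ≤ g.totalDegree + f.totalDegree - 2 := by
  have hj := totalDegree_pderiv_le_s2 j f
  by_cases hf : f.totalDegree ≤ 1
  · rw [totalDegree_eq_zero_iff_eq_C.mp (by omega : (pderiv j f).totalDegree = 0), pderiv_C,
      mul_zero, totalDegree_zero]
    exact Nat.zero_le _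
  have := totalDegree_mul_pderiv_le g i (pderiv j f)
  omega

end Derivatives

theorem totalDegree_Lop_le {d s : ℕ} {Φ : Matrix (Fin d) (Fin d) (MPoly d)}
    {Ψ : Fin d → MPoly d} (hΦ : matDeg Φ ≤ s + 2) (hΨ : vecDeg Ψ ≤ s + 1) (f : MPoly d) :
    (Lop Φ Ψ f).totalDegree ≤ f.totalDegree + s := by
  have hΦij (i j : Fin d) : (Φ i j).totalDegree ≤ s + 2 :=
    (Finset.le_sup (f := fun p : Fin d × Fin d => (Φ p.1 p.2).totalDegree) (mem_univ (i, j))).trans hΦ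
  have hΨi (i : Fin d) : (Ψ i).totalDegree ≤ s + 1 :=
    (Finset.le_sup (f := fun i => (Ψ i).totalDegree) (mem_univ i)).trans hΨ
  refine (totalDegree_add _ _).trans (max_le ?_ ?_)
  · refine totalDegree_finsetSum_le fun i _ => totalDegree_finsetSum_le fun j _ => ?_
    have := totalDegree_mul_pderiv_pderiv_le (Φ i j) i j f
    have := hΦij i j
    omega
  · refine totalDegree_finsetSum_le fun i _ => ?_
    have := totalDegree_mul_pderiv_le (Ψ i) i f
    have := hΨi i
    omega

theorem IsWOPS.apply_mul_eq_zero_of_totalDegree_lt_s2 {d : ℕ} {u : MomF d}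
    {P : (n : ℕ) → Fin (rdim d n) → MPoly d} (hW : IsWOPS u P) {n : ℕ} (k : Fin (rdim d n))
    {f : MPoly d} (hf : f.totalDegree < n) : u (P n k * f) = 0 := by
  have hspan : Submodule.span ℝ {g | ∃ m ≤ n - 1, ∃ j, P m j = g} ≤
      LinearMap.ker (u ∘ₗ LinearMap.mulLeft ℝ (P n k)) :=
    Submodule.span_le.mpr fun _ ⟨m, hm, j, hg⟩ => hg ▸ hW.orth n m (by omega) k j
  exact hspan (hW.span (n - 1) ((mem_restrictTotalDegree _ _ f).mpr (by omega)))

theorem Pearson.apply_gradient_form {d : ℕ} {u : MomF d} {Φ : Matrix (Fin d) (Fin d) (MPoly d)}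
    {Ψ : Fin d → MPoly d} (hP : Pearson u Φ Ψ) (g h : MPoly d) :
    u (∑ i, ∑ j, pderiv i h * Φ i j * pderiv j g) = -u (g * Lop Φ Ψ h) := by
  have hsum : ∑ i, (∑ j, Φ i j * pderiv j (g * pderiv i h) + Ψ i * (g * pderiv i h)) =
      ∑ i, ∑ j, pderiv i h * Φ i j * pderiv j g + g * Lop Φ Ψ h := by
    have hterm (i j : Fin d) : Φ i j * pderiv j (g * pderiv i h) =
        pderiv i h * Φ i j * pderiv j g + g * (Φ i j * pderiv i (pderiv j h)) := by
      rw [Derivation.leibniz, smul_eq_mul, smul_eq_mul, pderiv_pderiv_comm]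
      ring
    simp only [hterm, Lop, sum_add_distrib, mul_add, mul_sum, add_assoc, mul_left_comm (Ψ _) g]
  have h0 : u (∑ i, (∑ j, Φ i j * pderiv j (g * pderiv i h) + Ψ i * (g * pderiv i h))) = 0 := by
    rw [map_sum]
    exact Finset.sum_eq_zero fun i _ => hP (g * pderiv i h) i
  rw [hsum, map_add] at h0
  linarith

theorem transpose_gradT_mul_mul_gradT_apply {d a b : ℕ} (A : Fin a → MPoly d)
    (Φ : Matrix (Fin d) (Fin d) (MPoly d)) (B : Fin b → MPoly d) (j : Fin a) (k : Fin b) :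
    ((gradT A)ᵀ * Φ * gradT B) j k = ∑ i, ∑ l, pderiv i (A j) * Φ i l * pderiv l (B k) := by
  simp only [mul_apply, gradT, transpose_apply, of_apply, Finset.sum_mul]
  exact Finset.sum_comm

theorem gradient_quasi_orthogonality_general
    {d : ℕ} (u : MomF d) (P : (n : ℕ) → Fin (rdim d n) → MPoly d)
    (hW : IsWOPS u P)
    (Φ : Matrix (Fin d) (Fin d) (MPoly d))
    (Ψ : Fin d → MPoly d)
    (p q : ℕ) (hp : matDeg Φ = p) (hq : vecDeg Ψ = q)
    (hPearson : Pearson u Φ Ψ)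
    (s : ℕ) (hs : s = max (p - 2) (q - 1)) :
    ∀ n m : ℕ, s + 1 ≤ n → m + s < n →
      mApply u ((gradT (P m))ᵀ * Φ * gradT (P n)) = 0 := by
  intro n m _ hmn
  ext j k
  have hL := totalDegree_Lop_le (s := s) (Φ := Φ) (Ψ := Ψ) (by omega) (by omega) (P m j)
  rw [hW.deg m j] at hL
  rw [mApply, of_apply, transpose_gradT_mul_mul_gradT_apply, hPearson.apply_gradient_form,
    hW.apply_mul_eq_zero_of_totalDegree_lt_s2 k (by omega), neg_zero, Matrix.zero_apply]

/-- **Quasi-orthogonality of the gradients.**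
If `u` is semiclassical with data `Φ` (symmetric, degree `p`), `Ψ` (degree
`q ≥ 1`), `s = max{p−2, q−1}`, and `{ℙ_n}` is a WOPS for `u`, then for every
`n ≥ s+1` and every `0 ≤ m < n−s`, `⟨u, (∇ℙ_mᵗ)ᵗ Φ ∇ℙ_nᵗ⟩ = 0`. -/
theorem gradient_quasi_orthogonality
    {d : ℕ} (u : MomF d) (P : (n : ℕ) → Fin (rdim d n) → MPoly d)
    (hW : IsWOPS u P)
    (Φ : Matrix (Fin d) (Fin d) (MPoly d)) (hΦsym : Φ.IsSymm)
    (Ψ : Fin d → MPoly d)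
    (p q : ℕ) (hp : matDeg Φ = p) (hq : vecDeg Ψ = q) (hq1 : 1 ≤ q)
    (hPearson : Pearson u Φ Ψ)
    (hdet : (mApply u Φ).det ≠ 0)
    (s : ℕ) (hs : s = max (p - 2) (q - 1)) :
    ∀ n m : ℕ, s + 1 ≤ n → m + s < n →
      mApply u ((gradT (P m))ᵀ * Φ * gradT (P n)) = 0 :=
  gradient_quasi_orthogonality_general u P hW Φ Ψ p q hp hq hPearson s hs
end
end

section
/- Let u be a quasi-definite moment functional on real polynomials in d variables with a WOPS {ℙ_n}_{n≥0} normalized so that ∇ℙ_1^t = I_d, let Φ be a symmetric d×d polynomial matrix with det⟨u, Φ⟩ ≠ 0, and let s ≥ 0 be an integer with s ≥ deg Φ − 2. Assume that ⟨u, (∇ℙ_m^t)^t Φ ∇ℙ_n^t⟩ = 0 for every n ≥ s+1 and every 0 ≤ m < n−s. Then, setting Ψ = −Σ_{i=0}^{s+1} ⟨u, (∇ℙ_1^t)^t Φ ∇ℙ_i^t⟩ H_i^{−1} ℙ_i, a d×1 polynomial matrix of degree at most s+1, the moment functional u satisfies the matrix Pearson equation div(Φ u) = Ψ^t u. -/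
/-!
On the basis `{ℙ_n}` the Pearson functional `f ↦ ⟨u, (Φ ∇f)_a + Ψ_a f⟩` is computed by
orthogonality: since `∇ℙ_1ᵗ = I_d`, its first part on `ℙ_n` is the `a`-th row of
`⟨u, (∇ℙ_1ᵗ)ᵗ Φ ∇ℙ_nᵗ⟩`, which vanishes for `n ≥ s + 2` by quasi-orthogonality, while
`Ψ` is precisely the truncated Fourier expansion that cancels it for `n ≤ s + 1`.
A linear functional vanishing on a basis vanishes identically.
-/

open MvPolynomial Matrix Finset MeasureTheory

noncomputable section

/-- The canonical identification `Fin d ≃ Fin (r_1)` (since `r_1 = d`). -/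
def fin1cast (d : ℕ) (a : Fin d) : Fin (rdim d 1) :=
  Fin.cast (by simp [rdim, Nat.add_sub_cancel_left]) a

/-- The candidate Pearson polynomial vector
`Ψ = −Σ_{i=0}^{s+1} ⟨u, (∇ℙ_1ᵗ)ᵗ Φ ∇ℙ_iᵗ⟩ H_i⁻¹ ℙ_i`. -/
def psiDef {d : ℕ} (u : MomF d) (P : (n : ℕ) → Fin (rdim d n) → MPoly d)
    (Φ : Matrix (Fin d) (Fin d) (MPoly d)) (s : ℕ) : Fin d → MPoly d :=
  fun a => -∑ i ∈ Finset.range (s + 2), ∑ k,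
    MvPolynomial.C ((mApply u ((gradT (P 1))ᵀ * Φ * gradT (P i)) * (Hmat u P i)⁻¹)
      (fin1cast d a) k) * P i k

def pearsonForm {d : ℕ} (u : MomF d) (Φ : Matrix (Fin d) (Fin d) (MPoly d))
    (Ψ : Fin d → MPoly d) (i : Fin d) : MPoly d →ₗ[ℝ] ℝ :=
  u ∘ₗ (∑ j, LinearMap.mulLeft ℝ (Φ i j) ∘ₗ (pderiv j).toLinearMap + LinearMap.mulLeft ℝ (Ψ i))

section Pearson

variable {d : ℕ} (u : MomF d) (Φ : Matrix (Fin d) (Fin d) (MPoly d)) (Ψ : Fin d → MPoly d)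

theorem pearsonForm_apply (i : Fin d) (f : MPoly d) :
    pearsonForm u Φ Ψ i f = u (∑ j, Φ i j * pderiv j f + Ψ i * f) := by
  simp [pearsonForm]

theorem pearson_iff_pearsonForm_eq_zero :
    Pearson u Φ Ψ ↔ ∀ i, pearsonForm u Φ Ψ i = 0 := by
  simp only [Pearson, LinearMap.ext_iff, pearsonForm_apply, LinearMap.zero_apply]
  exact forall_comm

end Pearson

theorem gradT_transpose_mul_mul_gradT_apply {d m : ℕ} {P₁ : Fin (rdim d 1) → MPoly d}
    (hnorm : ∀ (i : Fin d) (k : Fin (rdim d 1)),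
      pderiv i (P₁ k) = if (i : ℕ) = (k : ℕ) then 1 else 0)
    (Φ : Matrix (Fin d) (Fin d) (MPoly d)) (Q : Fin m → MPoly d) (a : Fin d) (k : Fin m) :
    ((gradT P₁)ᵀ * Φ * gradT Q) (fin1cast d a) k = ∑ j, Φ a j * pderiv j (Q k) := by
  have hcast : ∀ i : Fin d, (i : ℕ) = (fin1cast d a : ℕ) ↔ i = a := by
    simp [fin1cast, Fin.ext_iff]
  simp [Matrix.mul_apply, gradT, hnorm, hcast]

namespace IsWOPS

variable {d : ℕ} {u : MomF d} {P : (n : ℕ) → Fin (rdim d n) → MPoly d}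

theorem span_eq_top (hW : IsWOPS u P) :
    Submodule.span ℝ (Set.range fun p : (n : ℕ) × Fin (rdim d n) => P p.1 p.2) = ⊤ := by
  refine eq_top_iff.2 fun f _ => ?_
  have hf : f ∈ restrictTotalDegree (Fin d) ℝ f.totalDegree := by
    rw [mem_restrictTotalDegree]
  refine Submodule.span_mono ?_ (hW.span f.totalDegree hf)
  rintro _ ⟨m, -, k, rfl⟩
  exact ⟨⟨m, k⟩, rfl⟩

theorem linearMap_ext {M : Type*} [AddCommMonoid M] [Module ℝ M] (hW : IsWOPS u P)
    {T T' : MPoly d →ₗ[ℝ] M} (h : ∀ n k, T (P n k) = T' (P n k)) : T = T' :=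
  LinearMap.ext_on hW.span_eq_top (by rintro _ ⟨⟨n, k⟩, rfl⟩; exact h n k)

theorem apply_sum_mul (hW : IsWOPS u P) (N : ℕ) (c : (i : ℕ) → Fin (rdim d i) → ℝ)
    (n : ℕ) (k : Fin (rdim d n)) :
    u ((∑ i ∈ range N, ∑ l, C (c i l) * P i l) * P n k) =
      if n < N then ∑ l, c n l * Hmat u P n l k else 0 := by
  simp only [Finset.sum_mul, map_sum, ← smul_eq_C_mul, smul_mul_assoc,
    LinearMap.map_smul, smul_eq_mul]
  split_ifs with hn
  · refine Finset.sum_eq_single_of_mem n (mem_range.2 hn) fun i _ hin => ?_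
    simp [hW.orth i n hin]
  · refine Finset.sum_eq_zero fun i hi => ?_
    have hin : i ≠ n := by rintro rfl; exact hn (mem_range.1 hi)
    simp [hW.orth i n hin]

theorem sum_mul_inv_Hmat_mul_Hmat (hW : IsWOPS u P) {ι : Type*} {n : ℕ}
    (A : Matrix ι (Fin (rdim d n)) ℝ) (a : ι) (k : Fin (rdim d n)) :
    ∑ l, (A * (Hmat u P n)⁻¹) a l * Hmat u P n l k = A a k := by
  have hH : IsUnit (Hmat u P n).det := isUnit_iff_ne_zero.2 (hW.Hdet n)
  rw [← Matrix.mul_apply, Matrix.mul_assoc, nonsing_inv_mul _ hH, Matrix.mul_one]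

theorem vecDeg_psiDef_le (hW : IsWOPS u P) (Φ : Matrix (Fin d) (Fin d) (MPoly d)) (s : ℕ) :
    vecDeg (psiDef u P Φ s) ≤ s + 1 := by
  refine Finset.sup_le fun a _ => ?_
  rw [psiDef, totalDegree_neg]
  refine (totalDegree_finsetSum _ _).trans (Finset.sup_le fun i hi => ?_)
  refine (totalDegree_finsetSum _ _).trans (Finset.sup_le fun l _ => ?_)
  calc (C _ * P i l).totalDegree ≤ (C _ : MPoly d).totalDegree + (P i l).totalDegree :=
        totalDegree_mul _ _
    _ = i := by rw [totalDegree_C, hW.deg, zero_add]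
    _ ≤ s + 1 := Nat.lt_succ_iff.1 (mem_range.1 hi)

end IsWOPS

theorem quasi_orthogonality_implies_pearson_general
    {d : ℕ} (u : MomF d) (P : (n : ℕ) → Fin (rdim d n) → MPoly d)
    (hW : IsWOPS u P)
    (hnorm : ∀ (i : Fin d) (k : Fin (rdim d 1)),
      pderiv i (P 1 k) = if (i : ℕ) = (k : ℕ) then 1 else 0)
    (Φ : Matrix (Fin d) (Fin d) (MPoly d))
    (s : ℕ)
    (hqo : ∀ n m : ℕ, s + 1 ≤ n → m + s < n →
      mApply u ((gradT (P m))ᵀ * Φ * gradT (P n)) = 0) :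
    vecDeg (psiDef u P Φ s) ≤ s + 1 ∧ Pearson u Φ (psiDef u P Φ s) := by
  refine ⟨hW.vecDeg_psiDef_le Φ s,
    (pearson_iff_pearsonForm_eq_zero _ _ _).2 fun a => hW.linearMap_ext fun n k => ?_⟩
  have hgrad : u (∑ j, Φ a j * pderiv j (P n k)) =
      mApply u ((gradT (P 1))ᵀ * Φ * gradT (P n)) (fin1cast d a) k := by
    rw [mApply, of_apply, gradT_transpose_mul_mul_gradT_apply hnorm]
  rw [pearsonForm_apply, LinearMap.zero_apply, map_add, hgrad, psiDef, neg_mul, map_neg,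
    hW.apply_sum_mul]
  split_ifs with hn
  · rw [hW.sum_mul_inv_Hmat_mul_Hmat, add_neg_cancel]
  · rw [hqo n 1 (by omega) (by omega), Matrix.zero_apply, neg_zero, add_zero]

/-- **Converse: quasi-orthogonality implies Pearson.**
Let `u` be quasi-definite with WOPS `{ℙ_n}` normalized so that `∇ℙ_1ᵗ = I_d`,
`Φ` symmetric with `det⟨u,Φ⟩ ≠ 0`, `s ≥ deg Φ − 2`. If
`⟨u, (∇ℙ_mᵗ)ᵗ Φ ∇ℙ_nᵗ⟩ = 0` for all `n ≥ s+1`, `0 ≤ m < n−s`, then with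
`Ψ = −Σ_{i=0}^{s+1} ⟨u, (∇ℙ_1ᵗ)ᵗ Φ ∇ℙ_iᵗ⟩ H_i⁻¹ ℙ_i` (of degree ≤ `s+1`),
`u` satisfies `div(Φ u) = Ψᵗ u`. -/
theorem quasi_orthogonality_implies_pearson
    {d : ℕ} (u : MomF d) (P : (n : ℕ) → Fin (rdim d n) → MPoly d)
    (hW : IsWOPS u P)
    (hnorm : ∀ (i : Fin d) (k : Fin (rdim d 1)),
      pderiv i (P 1 k) = if (i : ℕ) = (k : ℕ) then 1 else 0)
    (Φ : Matrix (Fin d) (Fin d) (MPoly d)) (hΦsym : Φ.IsSymm)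
    (hdet : (mApply u Φ).det ≠ 0)
    (s : ℕ) (hs : matDeg Φ - 2 ≤ s)
    (hqo : ∀ n m : ℕ, s + 1 ≤ n → m + s < n →
      mApply u ((gradT (P m))ᵀ * Φ * gradT (P n)) = 0) :
    vecDeg (psiDef u P Φ s) ≤ s + 1 ∧ Pearson u Φ (psiDef u P Φ s) :=
  quasi_orthogonality_implies_pearson_general u P hW hnorm Φ s hqo
end
end

section
/- Let u be a moment functional on real polynomials in d variables satisfying the matrix Pearson equation div(Φ u) = Ψ^t u, with Φ a symmetric d×d polynomial matrix and Ψ a d×1 polynomial matrix, and let L be the associated second-order operator. Then for all polynomials f and g: ⟨u, f · L[g]⟩ = −⟨u, (∇f)^t Φ ∇g⟩. -/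
/-! Sum the Pearson equation over the components of the vector field `f ∇g`: the product rule
splits `Φ ∇(f ∂ᵢg)` into `f Φ ∇∂ᵢg` and `∂ⱼf Φᵢⱼ ∂ᵢg`, and the symmetry of `Φ` turns these
into `f L[g]` (together with the `Ψ` terms) and `(∇f)ᵗ Φ ∇g`. -/

open MvPolynomial Matrix Finset MeasureTheory

noncomputable section

theorem Matrix.IsSymm.sum_sum_mul_swap {ι R : Type*} [Fintype ι] [Mul R] [AddCommMonoid R]
    {A : Matrix ι ι R} (hA : A.IsSymm) (F : ι → ι → R) :
    ∑ i, ∑ j, A i j * F j i = ∑ i, ∑ j, A i j * F i j := by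
  rw [Finset.sum_comm]
  simp only [hA.apply]

theorem Pearson.map_sum_eq_zero {d : ℕ} {u : MomF d} {Φ : Matrix (Fin d) (Fin d) (MPoly d)}
    {Ψ : Fin d → MPoly d} (h : Pearson u Φ Ψ) (v : Fin d → MPoly d) :
    u (∑ i, (∑ j, Φ i j * pderiv j (v i) + Ψ i * v i)) = 0 :=
  (map_sum u _ _).trans (Finset.sum_eq_zero fun i _ => h (v i) i)

theorem sum_pearson_mul_pderiv {d : ℕ} {Φ : Matrix (Fin d) (Fin d) (MPoly d)} (hΦ : Φ.IsSymm)
    (Ψ : Fin d → MPoly d) (f g : MPoly d) :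
    ∑ i, (∑ j, Φ i j * pderiv j (f * pderiv i g) + Ψ i * (f * pderiv i g)) =
      f * Lop Φ Ψ g + ∑ i, ∑ j, pderiv i f * Φ i j * pderiv j g := by
  simp only [pderiv_mul, mul_add, sum_add_distrib, Lop, mul_sum]
  rw [hΦ.sum_sum_mul_swap fun i j => pderiv i f * pderiv j g,
    hΦ.sum_sum_mul_swap fun i j => f * pderiv i (pderiv j g)]
  simp only [mul_left_comm, mul_comm]
  abel

/-- If `u` satisfies the matrix Pearson equation
`div(Φ u) = Ψᵗ u` with `Φ` symmetric, and `L` is the associated second-order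
operator, then `⟨u, f · L[g]⟩ = −⟨u, (∇f)ᵗ Φ ∇g⟩` for all polynomials `f, g`. -/
theorem pearson_bilinear_identity
    {d : ℕ} (u : MomF d)
    (Φ : Matrix (Fin d) (Fin d) (MPoly d)) (hΦsym : Φ.IsSymm)
    (Ψ : Fin d → MPoly d)
    (hPearson : Pearson u Φ Ψ) :
    ∀ f g : MPoly d,
      u (f * Lop Φ Ψ g) = -u (∑ i, ∑ j, pderiv i f * Φ i j * pderiv j g) := by
  intro f g
  have h := hPearson.map_sum_eq_zero fun i => f * pderiv i g
  rw [sum_pearson_mul_pderiv hΦsym, map_add] at h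
  exact eq_neg_of_add_eq_zero_left h
end
end

section
/- Let u be a moment functional on real polynomials in d variables satisfying the matrix Pearson equation div(Φ u) = Ψ^t u, with Φ a symmetric d×d polynomial matrix and Ψ a d×1 polynomial matrix, and let L be the associated second-order operator. Then the Lagrange adjoint of L annihilates u; that is, ⟨u, L[f]⟩ = 0 for every polynomial f. -/
open MvPolynomial Matrix Finset MeasureTheory

noncomputable section

theorem Lop_eq_sum_pearson_pderiv {d : ℕ} {Φ : Matrix (Fin d) (Fin d) (MPoly d)}
    (hΦ : Φ.IsSymm) (Ψ : Fin d → MPoly d) (f : MPoly d) :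
    Lop Φ Ψ f = ∑ i, (∑ j, Φ i j * pderiv j (pderiv i f) + Ψ i * pderiv i f) := by
  rw [Lop, Finset.sum_add_distrib, Finset.sum_comm]
  congr 1
  exact Finset.sum_congr rfl fun i _ => Finset.sum_congr rfl fun j _ => by rw [hΦ.apply i j]

/-- **The Lagrange adjoint annihilates `u`.**
If `u` satisfies the matrix Pearson equation `div(Φ u) = Ψᵗ u` with `Φ`
symmetric, and `L` is the associated second-order operator, then
`⟨u, L[f]⟩ = 0` for every polynomial `f`, i.e. `L*[u] = 0`. -/
theorem lagrange_adjoint_annihilates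
    {d : ℕ} (u : MomF d)
    (Φ : Matrix (Fin d) (Fin d) (MPoly d)) (hΦsym : Φ.IsSymm)
    (Ψ : Fin d → MPoly d)
    (hPearson : Pearson u Φ Ψ) :
    ∀ f : MPoly d, u (Lop Φ Ψ f) = 0 := by
  intro f
  rw [Lop_eq_sum_pearson_pderiv hΦsym, map_sum]
  exact Finset.sum_eq_zero fun i _ => hPearson (pderiv i f) i
end
end

section
/- Let u be a moment functional on real polynomials in d variables satisfying the matrix Pearson equation div(Φ u) = Ψ^t u, where Φ is a d×d polynomial matrix and Ψ is a d×1 polynomial matrix, let λ ∈ ℝ, and define v = u + λ δ_0, where ⟨δ_0, f⟩ = f(0). Fix i ∈ {1,…,d} and assume the i-th column Φe_i of Φ vanishes at the origin. Then v satisfies the matrix Pearson equation div((x_i Φ) v) = (Φe_i + x_i Ψ)^t v; that is, ⟨v, x_i Φ ∇f + (Φe_i + x_i Ψ) f⟩ = 0 for every polynomial f. -/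
/-! By the Leibniz rule, `xᵢ Φ ∇f + (Φeᵢ + xᵢ Ψ) f = Φ ∇(xᵢ f) + Ψ (xᵢ f)`, which `u` annihilates
by its own Pearson equation tested on `xᵢ f`. The same polynomial equals
`xᵢ (Φ ∇f + Ψ f) + (Φeᵢ) f`, which vanishes at the origin because `Φeᵢ` does, so `δ₀`
annihilates it too. -/

open MvPolynomial Matrix Finset MeasureTheory

noncomputable section

/-- The Dirac delta at the origin, `⟨δ₀, f⟩ = f(0)`, as a moment functional. -/
def dirac0 (d : ℕ) : MomF d :=
  (MvPolynomial.aeval (fun _ : Fin d => (0 : ℝ))).toLinearMap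

section PearsonTerm

variable {σ R : Type*} [Fintype σ] [CommSemiring R]

/-- The `a`-th entry of `Φ ∇f + Ψ f`. -/
def pearsonTerm (Φ : Matrix σ σ (MvPolynomial σ R)) (Ψ : σ → MvPolynomial σ R)
    (f : MvPolynomial σ R) (a : σ) : MvPolynomial σ R :=
  ∑ j, Φ a j * pderiv j f + Ψ a * f

variable [DecidableEq σ]

theorem pearsonTerm_X_mul (Φ : Matrix σ σ (MvPolynomial σ R)) (Ψ : σ → MvPolynomial σ R)
    (f : MvPolynomial σ R) (i a : σ) :
    pearsonTerm Φ Ψ (X i * f) a = X i * pearsonTerm Φ Ψ f a + Φ a i * f := by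
  have leibniz : ∀ j, Φ a j * pderiv j (X i * f)
      = X i * (Φ a j * pderiv j f) + Φ a j * (pderiv j (X i) * f) := by
    intro j
    rw [pderiv_mul]
    ring
  simp only [pearsonTerm, leibniz, sum_add_distrib, ← mul_sum, pderiv_X, Pi.single_apply,
    ite_mul, one_mul, zero_mul, mul_ite, mul_zero, sum_ite_eq, mem_univ, if_true]
  ring

theorem pearsonTerm_X_mul_left (Φ : Matrix σ σ (MvPolynomial σ R)) (Ψ : σ → MvPolynomial σ R)
    (f : MvPolynomial σ R) (i a : σ) :
    pearsonTerm (Matrix.of fun a b => X i * Φ a b) (fun a => Φ a i + X i * Ψ a) f a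
      = pearsonTerm Φ Ψ (X i * f) a := by
  rw [pearsonTerm_X_mul]
  simp only [pearsonTerm, Matrix.of_apply, mul_assoc, ← mul_sum]
  ring

end PearsonTerm

theorem dirac0_apply {d : ℕ} (p : MPoly d) : dirac0 d p = eval (fun _ => 0) p := by
  simp [dirac0]

/-- **Pearson equation for a Dirac modification.**
If `u` satisfies `div(Φ u) = Ψᵗ u`, `λ ∈ ℝ`, `v = u + λ δ₀`, and the `i`-th
column of `Φ` vanishes at the origin, then `v` satisfies
`div((xᵢ Φ) v) = (Φeᵢ + xᵢ Ψ)ᵗ v`. -/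
theorem dirac_modification_pearson
    {d : ℕ} (u : MomF d)
    (Φ : Matrix (Fin d) (Fin d) (MPoly d)) (Ψ : Fin d → MPoly d)
    (hPearson : Pearson u Φ Ψ)
    (lam : ℝ) (i : Fin d)
    (hcol : ∀ j : Fin d, MvPolynomial.eval (fun _ => (0 : ℝ)) (Φ j i) = 0) :
    Pearson (u + lam • dirac0 d)
      (Matrix.of fun a b => MvPolynomial.X i * Φ a b)
      (fun a => Φ a i + MvPolynomial.X i * Ψ a) := by
  intro f a
  change (u + lam • dirac0 d) (pearsonTerm (Matrix.of fun a b => X i * Φ a b)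
    (fun a => Φ a i + X i * Ψ a) f a) = 0
  have hu : u (pearsonTerm Φ Ψ (X i * f) a) = 0 := hPearson (X i * f) a
  have hδ : dirac0 d (pearsonTerm Φ Ψ (X i * f) a) = 0 := by
    rw [pearsonTerm_X_mul, dirac0_apply, map_add, map_mul, map_mul, hcol a, eval_X]
    ring
  rw [pearsonTerm_X_mul_left, LinearMap.add_apply, LinearMap.smul_apply, hu, hδ,
    smul_zero, add_zero]
end
end
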